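/- Let q and a be complex numbers with |q| < 1 and a ≠ 0. Define α_n = (a^{-n} + a^{n+1}) q^{n(n+1)/2} and β_n = (-a; q)_{n+1} (-q/a; q)_n / (q²; q)_{2n} for n ≥ 0. Then (α_n, β_n) form a Bailey pair relative to q; that is, for every n ≥ 0, β_n = ∑_{r=0}^n α_r / ((q; q)_{n-r} (q²; q)_{n+r}). -/

import Mathlib

/-!
Multiplied by `q ^ (C(n,2) + n(n+1)) * a ^ n`, the numerator `(-a;q)_{n+1} (-q/a;q)_n` becomes
`∏_{k=0}^{2n} (q^n + a q^k)`, which the q-binomial theorem expands as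
`∑_j [2n+1, j]_q q^C(j,2) a^j q^(n(2n+1-j))`. The terms `j = n - r` and `j = n + 1 + r` carry the
same Gaussian binomial and together give `α_r [2n+1, n-r]_q` (a finite Jacobi triple product).
Finally `[2n+1, n-r]_q / (q²;q)_{2n} = 1 / ((q;q)_{n-r} (q²;q)_{n+r})`, since
`(q;q)_{m+1} = (1 - q) (q²;q)_m`.
-/

/-- Finite q-Pochhammer symbol `(a; q)_n = ∏_{k=0}^{n-1} (1 - a q^k)`. -/
noncomputable def qPoch (a q : ℂ) (n : ℕ) : ℂ := ∏ k ∈ Finset.range n, (1 - a * q ^ k)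

open Finset

/-- The Gaussian binomial coefficient `[m, j]_q`, defined by the q-Pascal rule rather than as a
quotient of q-factorials, so that it makes sense (as a polynomial in `q`) for every `q`. -/
def gaussBinom (q : ℂ) : ℕ → ℕ → ℂ
  | _, 0 => 1
  | 0, _ + 1 => 0
  | m + 1, j + 1 => gaussBinom q m j + q ^ (j + 1) * gaussBinom q m (j + 1)

section GaussBinom

variable (q : ℂ)

@[simp]
theorem gaussBinom_zero_right (m : ℕ) : gaussBinom q m 0 = 1 := by
  cases m <;> rfl

theorem gaussBinom_succ_succ (m j : ℕ) :
    gaussBinom q (m + 1) (j + 1) = gaussBinom q m j + q ^ (j + 1) * gaussBinom q m (j + 1) :=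
  rfl

theorem gaussBinom_eq_zero_of_lt {m j : ℕ} (h : m < j) : gaussBinom q m j = 0 := by
  induction m generalizing j with
  | zero => obtain ⟨j, rfl⟩ := Nat.exists_eq_succ_of_ne_zero h.ne'; rfl
  | succ m ih =>
    obtain ⟨j, rfl⟩ := Nat.exists_eq_succ_of_ne_zero (Nat.ne_zero_of_lt h)
    rw [gaussBinom_succ_succ, ih (by omega), ih (by omega), mul_zero, add_zero]

@[simp]
theorem gaussBinom_self (m : ℕ) : gaussBinom q m m = 1 := by
  induction m with
  | zero => rfl
  | succ m ih => rw [gaussBinom_succ_succ, ih, gaussBinom_eq_zero_of_lt q m.lt_succ_self]; ring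

theorem prod_add_mul_pow_eq_sum_gaussBinom (x y : ℂ) (m : ℕ) :
    ∏ k ∈ range m, (x + y * q ^ k) =
      ∑ j ∈ range (m + 1), gaussBinom q m j * q ^ j.choose 2 * y ^ j * x ^ (m - j) := by
  induction m generalizing y with
  | zero => simp
  | succ m ih =>
    set f : ℕ → ℂ := fun j => gaussBinom q m j * q ^ j.choose 2 * (y * q) ^ j * x ^ (m - j)
    have hf : f (m + 1) = 0 := by simp [f, gaussBinom_eq_zero_of_lt q m.lt_succ_self]
    have hx : ∀ j, x ^ (m - j) * gaussBinom q m (j + 1) =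
        x * x ^ (m - (j + 1)) * gaussBinom q m (j + 1) := by
      intro j
      rcases lt_or_ge j m with h | h
      · rw [← pow_succ', show m - (j + 1) + 1 = m - j by omega]
      · simp [gaussBinom_eq_zero_of_lt q (show m < j + 1 by omega)]
    have hpascal : ∀ j, gaussBinom q (m + 1) (j + 1) * q ^ (j + 1).choose 2 * y ^ (j + 1) *
        x ^ (m + 1 - (j + 1)) = y * f j + x * f (j + 1) := by
      intro j
      simp only [f, gaussBinom_succ_succ, Nat.choose_succ_succ', Nat.choose_one_right,
        Nat.add_sub_add_right]
      linear_combination (q ^ (j + 1) * q ^ (j + j.choose 2) * y ^ (j + 1)) * hx j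
    calc ∏ k ∈ range (m + 1), (x + y * q ^ k)
        = (x + y) * ∑ j ∈ range (m + 1), f j := by
          rw [prod_range_succ', ← ih, pow_zero, mul_one, mul_comm]
          exact congrArg _ (prod_congr rfl fun k _ => by ring)
      _ = x * f 0 + ∑ j ∈ range (m + 1), (y * f j + x * f (j + 1)) := by
          rw [sum_add_distrib, ← mul_sum, ← mul_sum, sum_range_succ' f, sum_range_succ, hf]
          ring
      _ = _ := by
          rw [sum_range_succ' _ (m + 1), sum_congr rfl fun j _ => hpascal j, add_comm]
          simp [f, pow_succ']

end GaussBinom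

theorem qPoch_succ (a q : ℂ) (n : ℕ) : qPoch a q (n + 1) = qPoch a q n * (1 - a * q ^ n) :=
  prod_range_succ _ n

theorem qPoch_succ' (a q : ℂ) (n : ℕ) : qPoch a q (n + 1) = (1 - a) * qPoch (a * q) q n := by
  simp only [qPoch, prod_range_succ', pow_zero, mul_one, mul_comm (1 - a), pow_succ', mul_assoc]

@[simp]
theorem qPoch_zero_left (q : ℂ) (n : ℕ) : qPoch 0 q n = 1 := by
  simp [qPoch]

theorem qPoch_ne_zero {a q : ℂ} (ha : ‖a‖ < 1) (hq : ‖q‖ ≤ 1) (n : ℕ) : qPoch a q n ≠ 0 := by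
  refine prod_ne_zero_iff.2 fun k _ => sub_ne_zero.2 fun h => ?_
  have : ‖a * q ^ k‖ < 1 := by
    rw [norm_mul, norm_pow]
    exact (mul_le_of_le_one_right (norm_nonneg a) (pow_le_one₀ (norm_nonneg q) hq)).trans_lt ha
  rw [← h, norm_one] at this
  exact this.false

theorem qPoch_mul_qPoch_mul_gaussBinom (q : ℂ) (i j : ℕ) :
    qPoch q q i * qPoch q q j * gaussBinom q (i + j) i = qPoch q q (i + j) := by
  induction j generalizing i with
  | zero => simp [qPoch]
  | succ j ihj =>
    induction i with
    | zero => simp [qPoch]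
    | succ i ihi =>
      have hi := ihj (i + 1)
      rw [show i + 1 + j = i + (j + 1) by omega] at hi
      rw [show i + 1 + (j + 1) = i + (j + 1) + 1 by omega, gaussBinom_succ_succ,
        qPoch_succ q q (i + (j + 1))]
      rw [qPoch_succ q q i] at hi ⊢
      rw [qPoch_succ q q j] at ihi ⊢
      linear_combination (1 - q * q ^ i) * ihi + q ^ (i + 1) * (1 - q * q ^ j) * hi

theorem qPoch_self_ne_zero {q : ℂ} (hq : ‖q‖ < 1) (n : ℕ) : qPoch q q n ≠ 0 :=
  qPoch_ne_zero hq hq.le n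

theorem qPoch_sq_ne_zero {q : ℂ} (hq : ‖q‖ < 1) (n : ℕ) : qPoch (q ^ 2) q n ≠ 0 :=
  qPoch_ne_zero (by rw [norm_pow]; exact pow_lt_one₀ (norm_nonneg q) hq two_ne_zero) hq.le n

theorem gaussBinom_symm {q : ℂ} (hq : ‖q‖ < 1) (i j : ℕ) :
    gaussBinom q (i + j) i = gaussBinom q (i + j) j := by
  have hij := qPoch_mul_qPoch_mul_gaussBinom q i j
  have hji := qPoch_mul_qPoch_mul_gaussBinom q j i
  rw [add_comm j i, ← hij, mul_comm (qPoch q q j)] at hji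
  exact (mul_left_cancel₀
    (mul_ne_zero (qPoch_self_ne_zero hq i) (qPoch_self_ne_zero hq j)) hji).symm

theorem gaussBinom_div_qPoch_sq {q : ℂ} (hq : ‖q‖ < 1) (i j : ℕ) :
    gaussBinom q (i + j + 1) i / qPoch (q ^ 2) q (i + j) =
      1 / (qPoch q q i * qPoch (q ^ 2) q j) := by
  have h := qPoch_mul_qPoch_mul_gaussBinom q i (j + 1)
  rw [← add_assoc, qPoch_succ', qPoch_succ', ← sq] at h
  have h1q : (1 : ℂ) - q ≠ 0 := by simpa [qPoch] using qPoch_self_ne_zero hq 1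
  rw [div_eq_div_iff (qPoch_sq_ne_zero hq _)
    (mul_ne_zero (qPoch_self_ne_zero hq i) (qPoch_sq_ne_zero hq j))]
  apply mul_left_cancel₀ h1q
  linear_combination h

theorem choose_two_sub_add_mul {n r : ℕ} (h : r ≤ n) :
    (n - r).choose 2 + n * (n + r + 1) = n.choose 2 + n * (n + 1) + (r + 1).choose 2 := by
  apply Nat.cast_injective (R := ℚ)
  push_cast [Nat.cast_choose_two, Nat.cast_sub h]
  ring

theorem choose_two_add_add_mul {n r : ℕ} (h : r ≤ n) :
    (n + 1 + r).choose 2 + n * (n - r) = n.choose 2 + n * (n + 1) + (r + 1).choose 2 := by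
  apply Nat.cast_injective (R := ℚ)
  push_cast [Nat.cast_choose_two, Nat.cast_sub h]
  ring

theorem pow_mul_qPoch_neg_div {a : ℂ} (ha : a ≠ 0) (b q : ℂ) (n : ℕ) :
    a ^ n * qPoch (-(b / a)) q n = ∏ k ∈ range n, (a + b * q ^ k) := by
  rw [qPoch, ← card_range n, ← prod_const, card_range, ← prod_mul_distrib]
  refine prod_congr rfl fun k _ => ?_
  field_simp
  ring

theorem prod_range_pow_add_mul_pow {a : ℂ} (ha : a ≠ 0) (q : ℂ) (n : ℕ) :
    ∏ k ∈ range (2 * n + 1), (q ^ n + a * q ^ k) =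
      q ^ (n.choose 2 + n * (n + 1)) * a ^ n * (qPoch (-a) q (n + 1) * qPoch (-(q / a)) q n) := by
  have hlow : ∏ k ∈ range n, (q ^ n + a * q ^ k) =
      q ^ n.choose 2 * (a ^ n * qPoch (-(q / a)) q n) := by
    calc ∏ k ∈ range n, (q ^ n + a * q ^ k)
        = ∏ k ∈ range n, (q ^ k * (a + q * q ^ (n - 1 - k))) := by
          refine prod_congr rfl fun k hk => ?_
          rw [mul_add, ← pow_succ', ← pow_add, show k + (n - 1 - k + 1) = n by
            have := mem_range.1 hk; omega]
          ring
      _ = q ^ n.choose 2 * (a ^ n * qPoch (-(q / a)) q n) := by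
          rw [prod_mul_distrib, prod_pow_eq_pow_sum, sum_range_id, ← Nat.choose_two_right,
            prod_range_reflect (fun k => a + q * q ^ k), pow_mul_qPoch_neg_div ha]
  have hhigh : ∏ i ∈ range (n + 1), (q ^ n + a * q ^ (n + i)) =
      q ^ (n * (n + 1)) * qPoch (-a) q (n + 1) := by
    rw [pow_mul, qPoch, ← card_range (n + 1), ← prod_const, card_range, ← prod_mul_distrib]
    exact prod_congr rfl fun i _ => by ring
  rw [two_mul, add_assoc, prod_range_add, hlow, hhigh]
  ring

theorem gaussBinom_pair_eq {q a : ℂ} (hq : ‖q‖ < 1) (ha : a ≠ 0) {n r : ℕ} (h : r ≤ n) :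
    gaussBinom q (2 * n + 1) (n - r) * q ^ (n - r).choose 2 * a ^ (n - r) *
        (q ^ n) ^ (2 * n + 1 - (n - r)) +
      gaussBinom q (2 * n + 1) (n + 1 + r) * q ^ (n + 1 + r).choose 2 * a ^ (n + 1 + r) *
        (q ^ n) ^ (2 * n + 1 - (n + 1 + r)) =
      q ^ (n.choose 2 + n * (n + 1)) * a ^ n *
        ((a ^ (-(r : ℤ)) + a ^ ((r : ℤ) + 1)) * q ^ (r * (r + 1) / 2) *
          gaussBinom q (2 * n + 1) (n - r)) := by
  have hsymm : gaussBinom q (2 * n + 1) (n + 1 + r) = gaussBinom q (2 * n + 1) (n - r) := by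
    have := gaussBinom_symm hq (n + 1 + r) (n - r)
    rwa [show n + 1 + r + (n - r) = 2 * n + 1 by omega] at this
  have hzpow : a ^ n * (a ^ (-(r : ℤ)) + a ^ ((r : ℤ) + 1)) = a ^ (n - r) + a ^ (n + 1 + r) := by
    obtain ⟨t, rfl⟩ := Nat.exists_eq_add_of_le h
    rw [Nat.add_sub_cancel_left, zpow_neg, zpow_add_one₀ ha, zpow_natCast]
    field_simp
    ring
  have htri : r * (r + 1) / 2 = (r + 1).choose 2 := by
    rw [Nat.choose_two_right, Nat.add_sub_cancel, mul_comm]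
  have hlow : q ^ (n - r).choose 2 * (q ^ n) ^ (2 * n + 1 - (n - r)) =
      q ^ (n.choose 2 + n * (n + 1)) * q ^ (r * (r + 1) / 2) := by
    rw [← pow_mul, ← pow_add, ← pow_add, show 2 * n + 1 - (n - r) = n + r + 1 by omega,
      choose_two_sub_add_mul h, htri]
  have hhigh : q ^ (n + 1 + r).choose 2 * (q ^ n) ^ (2 * n + 1 - (n + 1 + r)) =
      q ^ (n.choose 2 + n * (n + 1)) * q ^ (r * (r + 1) / 2) := by
    rw [← pow_mul, ← pow_add, ← pow_add, show 2 * n + 1 - (n + 1 + r) = n - r by omega,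
      choose_two_add_add_mul h, htri]
  rw [hsymm]
  linear_combination gaussBinom q (2 * n + 1) (n - r) * (a ^ (n - r) * hlow +
    a ^ (n + 1 + r) * hhigh - q ^ (n.choose 2 + n * (n + 1)) * q ^ (r * (r + 1) / 2) * hzpow)

theorem finite_triple_product {q a : ℂ} (hq : ‖q‖ < 1) (ha : a ≠ 0) (n : ℕ) :
    qPoch (-a) q (n + 1) * qPoch (-(q / a)) q n =
      ∑ r ∈ range (n + 1), (a ^ (-(r : ℤ)) + a ^ ((r : ℤ) + 1)) * q ^ (r * (r + 1) / 2) *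
        gaussBinom q (2 * n + 1) (n - r) := by
  rcases eq_or_ne q 0 with rfl | hq0
  · have hbinom : gaussBinom 0 (2 * n + 1) n = 1 := by
      simpa [two_mul, add_assoc] using qPoch_mul_qPoch_mul_gaussBinom 0 n (n + 1)
    rw [sum_eq_single_of_mem 0 (by simp) fun r _ hr => ?_]
    · simp [qPoch_succ', hbinom]
    · have : 0 < r * (r + 1) / 2 := Nat.div_pos (by nlinarith [Nat.pos_of_ne_zero hr]) two_pos
      simp [zero_pow this.ne']
  set N := n.choose 2 + n * (n + 1)
  set g : ℕ → ℂ := fun j => gaussBinom q (2 * n + 1) j * q ^ j.choose 2 * a ^ j *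
    (q ^ n) ^ (2 * n + 1 - j)
  apply mul_left_cancel₀ (mul_ne_zero (pow_ne_zero N hq0) (pow_ne_zero n ha))
  calc q ^ N * a ^ n * (qPoch (-a) q (n + 1) * qPoch (-(q / a)) q n)
      = ∏ k ∈ range (2 * n + 1), (q ^ n + a * q ^ k) := (prod_range_pow_add_mul_pow ha q n).symm
    _ = ∑ j ∈ range (2 * n + 1 + 1), g j := prod_add_mul_pow_eq_sum_gaussBinom q _ _ _
    _ = ∑ r ∈ range (n + 1), (g (n - r) + g (n + 1 + r)) := by
      rw [show 2 * n + 1 + 1 = (n + 1) + (n + 1) by ring, sum_range_add, ← sum_range_reflect,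
        ← sum_add_distrib, Nat.add_sub_cancel]
    _ = _ := by
      rw [mul_sum]
      exact sum_congr rfl fun r hr =>
        gaussBinom_pair_eq hq ha (Nat.lt_succ_iff.1 (mem_range.1 hr))

/-- The Andrews–Berndt Bailey pair relative to `q`. -/
theorem andrews_berndt_bailey_pair (q a : ℂ) (hq : ‖q‖ < 1) (ha : a ≠ 0) (n : ℕ) :
    qPoch (-a) q (n + 1) * qPoch (-(q / a)) q n / qPoch (q ^ 2) q (2 * n) =
    ∑ r ∈ Finset.range (n + 1),
      (a ^ (-(r : ℤ)) + a ^ ((r : ℤ) + 1)) * q ^ (r * (r + 1) / 2) /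
        (qPoch q q (n - r) * qPoch (q ^ 2) q (n + r)) := by
  rw [finite_triple_product hq ha, sum_div]
  refine sum_congr rfl fun r hr => ?_
  have hr : r ≤ n := Nat.lt_succ_iff.1 (mem_range.1 hr)
  have := gaussBinom_div_qPoch_sq hq (n - r) (n + r)
  rw [show n - r + (n + r) = 2 * n by omega] at this
  rw [mul_div_assoc, this, mul_one_div]
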